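/- arXiv:2412.11546 — 2 statements merged into one kernel-verified Lean document; each statement's English description precedes it below -/
import Mathlib

section
/- For the three-mirror afocal system with d₁ < 0 fixed, the discriminant of the pivot quadratic (−Gd₂+d₁)Ω₁² + 2G(d₂−d₁)Ω₁ + G(Gd₁−d₂) in Ω₁ equals 4Gd₁d₂(G−1)². In particular, for d₁ < 0, d₂ > 0 and G ≠ 0, G ≠ 1, this discriminant is nonnegative if and only if G < 0. -/
/-!
Expanding, the discriminant collapses to `4 G d₁ d₂ (G - 1)²`. For `d₁ < 0 < d₂` and `G ≠ 1`
the factor `4 d₁ d₂ (G - 1)²` is strictly negative, so the discriminant has the sign opposite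
to `G`.
-/

theorem afocal_discriminant_eq {R : Type*} [CommRing R] (d₁ d₂ G : R) :
    (2 * G * (d₂ - d₁)) ^ 2 - 4 * (-G * d₂ + d₁) * (G * (G * d₁ - d₂))
      = 4 * G * d₁ * d₂ * (G - 1) ^ 2 := by
  ring

theorem mul_nonneg_iff_neg_of_neg_right {R : Type*} [Ring R] [LinearOrder R]
    [IsStrictOrderedRing R]
    {a b : R} (ha : a ≠ 0) (hb : b < 0) : 0 ≤ a * b ↔ a < 0 :=
  ⟨fun h => (nonpos_of_mul_nonneg_left h hb).lt_of_ne ha,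
    fun h => (mul_pos_of_neg_of_neg h hb).le⟩

/-- Three-mirror afocal system (codimension 2): the discriminant of the pivot
quadratic `(-G d₂ + d₁)Ω₁² + 2G(d₂ - d₁)Ω₁ + G(G d₁ - d₂)` equals
`4 G d₁ d₂ (G-1)²`, and on the physical region it is nonnegative iff `G < 0`. -/
theorem afocal_discriminant (d₁ d₂ G : ℝ)
    (hd₁ : d₁ < 0) (hd₂ : 0 < d₂) (hG : G ≠ 0) (hG1 : G ≠ 1) :
    (2 * G * (d₂ - d₁)) ^ 2 - 4 * (-G * d₂ + d₁) * (G * (G * d₁ - d₂))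
        = 4 * G * d₁ * d₂ * (G - 1) ^ 2
      ∧ (4 * G * d₁ * d₂ * (G - 1) ^ 2 ≥ 0 ↔ G < 0) := by
  refine ⟨afocal_discriminant_eq d₁ d₂ G, ?_⟩
  have hsq : 0 < (G - 1) ^ 2 := sq_pos_iff.2 (sub_ne_zero.2 hG1)
  have hfactor : 4 * d₁ * d₂ * (G - 1) ^ 2 < 0 :=
    mul_neg_of_neg_of_pos (mul_neg_of_neg_of_pos (mul_neg_of_pos_of_neg four_pos hd₁) hd₂) hsq
  rw [ge_iff_le,
    show 4 * G * d₁ * d₂ * (G - 1) ^ 2 = G * (4 * d₁ * d₂ * (G - 1) ^ 2) by ring]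
  exact mul_nonneg_iff_neg_of_neg_right hG hfactor
end

section
/- Let V2 = [[1,0],[−V,1]] and D(d,k) = [[1,(−1)^k d],[0,1]] be 2×2 real matrices. For N ≥ 2, mirrors with vergences V_k = 2(−1)^k c_k, curvatures given by c₁ = (1−Ω₁)/(2d₁), c_k = (1−Ω_{k−1})/(2Ω_{k−1}d_{k−1}) + (1−Ω_k)/(2d_k) for 2 ≤ k ≤ N−1, c_N = (1−Ω_{N−1})/(2Ω_{N−1}d_{N−1}) + v'_N/2 (object at infinity, v₁ = 0), and the product M_N = M_{V_N} M_{d_{N−1}} ⋯ M_{d_1} M_{V_1}, we have Ω_{s}·M_N = [[Ω_s², S], [−Ω_s²(−1)^N v'_N, −S(−1)^N v'_N + 1]] where Ω_s = ∏_{i=1}^{N−1} Ω_i and S = ∑_{l=1}^{N−1} (−1)^l d_l Ω_l ∏_{i=l+1}^{N−1} Ω_i². -/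
/-!
After scaling by `Ω₁ ⋯ Ω_M`, the product of the first `M + 1` mirrors and the `M` gaps between
them keeps the shape `!![p², s; p² w, s w + 1]` of the identity `(p, s, w) = (1, 0, 0)`.
A mirror only shifts `w` by minus its vergence, and a gap of length `d`, followed by scaling
with `Ω`, maps `(p, s, w)` to `(p Ω, s Ω² ± d Ω, w / Ω)` provided `± d w = Ω - 1`. The
curvatures are chosen precisely so that this condition holds at every gap: the first summand
of `c_k` cancels the `w` left over from gap `k - 1`, and the second one creates the `w` needed
at gap `k` (at the last mirror, the value `-(-1)^N v'`).
-/

open Matrix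

/-- Mirror transfer matrix with vergence `V = 2(-1)^k c`. -/
noncomputable def mirrorMatrix (c : ℝ) (k : ℕ) : Matrix (Fin 2) (Fin 2) ℝ :=
  !![1, 0; -(2 * (-1 : ℝ) ^ k * c), 1]

/-- Propagation matrix over the signed distance `(-1)^k d_k`. -/
noncomputable def distMatrix (dk : ℝ) (k : ℕ) : Matrix (Fin 2) (Fin 2) ℝ :=
  !![1, (-1 : ℝ) ^ k * dk; 0, 1]

/-- The transfer matrix `M_N = M_{V_N} M_{d_{N-1}} M_{V_{N-1}} ⋯ M_{d_1} M_{V_1}`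
of the first `N` mirrors. -/
noncomputable def transferMatrix (c d : ℕ → ℝ) : ℕ → Matrix (Fin 2) (Fin 2) ℝ
  | 0 => 1
  | 1 => mirrorMatrix (c 1) 1
  | (k + 2) =>
      mirrorMatrix (c (k + 2)) (k + 2) * distMatrix (d (k + 1)) (k + 1) *
        transferMatrix c d (k + 1)

def closedForm (p s w : ℝ) : Matrix (Fin 2) (Fin 2) ℝ :=
  !![p ^ 2, s; p ^ 2 * w, s * w + 1]

lemma closedForm_one_zero_zero : closedForm 1 0 0 = 1 := by
  rw [closedForm, one_fin_two]
  norm_num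

lemma mirrorMatrix_mul_closedForm (c : ℝ) (k : ℕ) (p s w : ℝ) :
    mirrorMatrix c k * closedForm p s w = closedForm p s (w - 2 * (-1) ^ k * c) := by
  rw [mirrorMatrix, closedForm, closedForm, mul_fin_two]
  simp only [EmbeddingLike.apply_eq_iff_eq, vecCons_inj, and_true]
  refine ⟨⟨?_, ?_⟩, ?_, ?_⟩ <;> ring

lemma smul_distMatrix_mul_closedForm {d Ω w : ℝ} {k : ℕ} (hΩ : Ω ≠ 0)
    (hw : (-1) ^ k * d * w = Ω - 1) (p s : ℝ) :
    Ω • (distMatrix d k * closedForm p s w)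
      = closedForm (p * Ω) (s * Ω ^ 2 + (-1) ^ k * d * Ω) (w / Ω) := by
  rw [distMatrix, closedForm, closedForm, mul_fin_two]
  simp only [smul_of, smul_cons, smul_eq_mul, smul_empty, EmbeddingLike.apply_eq_iff_eq,
    vecCons_inj, and_true]
  refine ⟨⟨?_, ?_⟩, ?_, ?_⟩ <;> field_simp
  · linear_combination p ^ 2 * hw
  · linear_combination s * hw
  · ring
  · linear_combination -hw

lemma neg_one_pow_mul_mul_div_cancel {d : ℝ} (hd : d ≠ 0) (k : ℕ) (x : ℝ) :
    (-1) ^ k * d * ((-1) ^ k * x / d) = x := by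
  field_simp
  rw [← pow_mul, pow_mul', neg_one_sq, one_pow, one_mul]

def signedDistSum (d Ω : ℕ → ℝ) (M : ℕ) : ℝ :=
  ∑ l ∈ Finset.Icc 1 M, (-1) ^ l * d l * Ω l * ∏ i ∈ Finset.Icc (l + 1) M, Ω i ^ 2

lemma signedDistSum_zero (d Ω : ℕ → ℝ) : signedDistSum d Ω 0 = 0 := rfl

lemma signedDistSum_succ (d Ω : ℕ → ℝ) (M : ℕ) :
    signedDistSum d Ω (M + 1)
      = signedDistSum d Ω M * Ω (M + 1) ^ 2 + (-1) ^ (M + 1) * d (M + 1) * Ω (M + 1) := by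
  rw [signedDistSum, Finset.sum_Icc_succ_top (by omega),
    Finset.Icc_eq_empty_of_lt (a := M + 1 + 1) (by omega), Finset.prod_empty, mul_one,
    signedDistSum, Finset.sum_mul]
  congr 1
  refine Finset.sum_congr rfl fun l hl => ?_
  rw [Finset.prod_Icc_succ_top (by simp at hl; omega)]
  ring

lemma prod_smul_transferMatrix_succ_succ (c d Ω : ℕ → ℝ) (M : ℕ) :
    (∏ i ∈ Finset.Icc 1 (M + 1), Ω i) • transferMatrix c d (M + 2)
      = mirrorMatrix (c (M + 2)) (M + 2) * (Ω (M + 1) • (distMatrix (d (M + 1)) (M + 1) *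
          ((∏ i ∈ Finset.Icc 1 M, Ω i) • transferMatrix c d (M + 1)))) := by
  rw [Finset.prod_Icc_succ_top (by omega), transferMatrix]
  simp only [mul_smul_comm, smul_smul, mul_assoc]
  rw [mul_comm (Ω (M + 1))]

lemma prod_smul_transferMatrix_succ_succ_eq_closedForm {c d Ω : ℕ → ℝ} {M : ℕ}
    (hΩ : Ω (M + 1) ≠ 0) (hd : d (M + 1) ≠ 0)
    (h : (∏ i ∈ Finset.Icc 1 M, Ω i) • transferMatrix c d (M + 1)
      = closedForm (∏ i ∈ Finset.Icc 1 M, Ω i) (signedDistSum d Ω M)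
          ((-1) ^ (M + 1) * (Ω (M + 1) - 1) / d (M + 1))) :
    (∏ i ∈ Finset.Icc 1 (M + 1), Ω i) • transferMatrix c d (M + 2)
      = closedForm (∏ i ∈ Finset.Icc 1 (M + 1), Ω i) (signedDistSum d Ω (M + 1))
          ((-1) ^ (M + 1) * (Ω (M + 1) - 1) / d (M + 1) / Ω (M + 1)
            - 2 * (-1) ^ (M + 2) * c (M + 2)) := by
  rw [prod_smul_transferMatrix_succ_succ, h,
    smul_distMatrix_mul_closedForm hΩ (neg_one_pow_mul_mul_div_cancel hd _ _),
    mirrorMatrix_mul_closedForm, ← Finset.prod_Icc_succ_top (by omega), ← signedDistSum_succ]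

lemma prod_smul_transferMatrix_eq_closedForm {d Ω c : ℕ → ℝ} {M : ℕ}
    (hΩ : ∀ k ∈ Finset.Icc 1 M, Ω k ≠ 0)
    (hd : ∀ k ∈ Finset.Icc 1 M, d k ≠ 0)
    (hc₁ : c 1 = (1 - Ω 1) / (2 * d 1))
    (hck : ∀ k, 2 ≤ k → k ≤ M + 1 →
      c k = (1 - Ω (k - 1)) / (2 * Ω (k - 1) * d (k - 1)) + (1 - Ω k) / (2 * d k)) :
    (∏ i ∈ Finset.Icc 1 M, Ω i) • transferMatrix c d (M + 1)
      = closedForm (∏ i ∈ Finset.Icc 1 M, Ω i) (signedDistSum d Ω M)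
          ((-1) ^ (M + 1) * (Ω (M + 1) - 1) / d (M + 1)) := by
  induction M with
  | zero =>
    rw [Finset.Icc_eq_empty_of_lt zero_lt_one, Finset.prod_empty, signedDistSum_zero, one_smul,
      transferMatrix, ← mul_one (mirrorMatrix _ _), ← closedForm_one_zero_zero,
      mirrorMatrix_mul_closedForm, hc₁]
    congr 1
    ring
  | succ M ih =>
    rw [prod_smul_transferMatrix_succ_succ_eq_closedForm (hΩ (M + 1) (by simp))
      (hd (M + 1) (by simp))
      (ih (fun k hk => hΩ k (Finset.Icc_subset_Icc_right (by omega) hk))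
        (fun k hk => hd k (Finset.Icc_subset_Icc_right (by omega) hk))
        (fun k hk₂ hk => hck k hk₂ (by omega))),
      hck (M + 2) (by omega) le_rfl, show M + 2 - 1 = M + 1 by omega]
    congr 1
    field_simp
    ring

/-- Proposition 2.1: closed form of the first-order transfer matrix of an
`N`-mirror telescope with object at infinity. -/
theorem transfer_matrix_closed_form (N : ℕ) (hN : 2 ≤ N)
    (d Ω c : ℕ → ℝ) (v' : ℝ)
    (hΩ : ∀ k ∈ Finset.Icc 1 (N - 1), Ω k ≠ 0)
    (hd : ∀ k ∈ Finset.Icc 1 (N - 1), d k ≠ 0)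
    (hc₁ : c 1 = (1 - Ω 1) / (2 * d 1))
    (hck : ∀ k, 2 ≤ k → k ≤ N - 1 →
      c k = (1 - Ω (k - 1)) / (2 * Ω (k - 1) * d (k - 1)) + (1 - Ω k) / (2 * d k))
    (hcN : c N = (1 - Ω (N - 1)) / (2 * Ω (N - 1) * d (N - 1)) + v' / 2) :
    (∏ i ∈ Finset.Icc 1 (N - 1), Ω i) • transferMatrix c d N
      = !![(∏ i ∈ Finset.Icc 1 (N - 1), Ω i) ^ 2,
            ∑ l ∈ Finset.Icc 1 (N - 1),
              (-1 : ℝ) ^ l * d l * Ω l * ∏ i ∈ Finset.Icc (l + 1) (N - 1), Ω i ^ 2;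
          -(∏ i ∈ Finset.Icc 1 (N - 1), Ω i) ^ 2 * (-1 : ℝ) ^ N * v',
            -(∑ l ∈ Finset.Icc 1 (N - 1),
                (-1 : ℝ) ^ l * d l * Ω l *
                  ∏ i ∈ Finset.Icc (l + 1) (N - 1), Ω i ^ 2) *
              (-1 : ℝ) ^ N * v' + 1] := by
  obtain ⟨M, rfl⟩ : ∃ M, N = M + 2 := ⟨N - 2, by omega⟩
  simp only [show M + 2 - 1 = M + 1 by omega] at hΩ hd hck hcN ⊢
  rw [prod_smul_transferMatrix_succ_succ_eq_closedForm (hΩ (M + 1) (by simp))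
    (hd (M + 1) (by simp))
    (prod_smul_transferMatrix_eq_closedForm
      (fun k hk => hΩ k (Finset.Icc_subset_Icc_right (by omega) hk))
      (fun k hk => hd k (Finset.Icc_subset_Icc_right (by omega) hk)) hc₁ hck),
    hcN, closedForm, signedDistSum]
  have hΩM : Ω (M + 1) ≠ 0 := hΩ (M + 1) (by simp)
  have hdM : d (M + 1) ≠ 0 := hd (M + 1) (by simp)
  simp only [EmbeddingLike.apply_eq_iff_eq, vecCons_inj, and_true, true_and]
  constructor <;> field_simp <;> ring
end
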